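/- arXiv:math/0610877 — 4 statements merged into one kernel-verified Lean document; each statement's English description precedes it below -/
import Mathlib

section
/- Let C be a category and F a functor from C to ℂ-vector spaces, and suppose F is irreducible. Then for every object X of C, every subspace of F(X) that is invariant under F(P) for all endomorphisms P : X ⟶ X equals 0 or all of F(X); that is, all subordinated representations of the endomorphism monoids End(X) are irreducible. (Lemma of Section 4 / Lemma 5.5.) -/
/-!
The images of `U` under all morphisms out of `X` span a subrepresentation of `F`; its value
at `X` is `U` itself because `U` is stable under `End X`, so irreducibility of `F` forces
`U = ⊥` or `U = ⊤`.
-/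

open CategoryTheory

namespace CategoryTheory.Functor

variable {C : Type*} [Category C] {R : Type*} [Ring R] (F : C ⥤ ModuleCat R)

def generatedSubrep {X : C} (U : Submodule R (F.obj X)) (Y : C) : Submodule R (F.obj Y) :=
  ⨆ P : X ⟶ Y, U.map (F.map P).hom

variable {F}

theorem map_generatedSubrep_le {X : C} (U : Submodule R (F.obj X)) {Y Z : C} (Q : Y ⟶ Z) :
    (F.generatedSubrep U Y).map (F.map Q).hom ≤ F.generatedSubrep U Z := by
  rw [generatedSubrep, Submodule.map_iSup]
  refine iSup_le fun P => le_iSup_of_le (P ≫ Q) ?_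
  rw [F.map_comp, ModuleCat.hom_comp, Submodule.map_comp]

theorem generatedSubrep_self {X : C} {U : Submodule R (F.obj X)}
    (hU : ∀ P : X ⟶ X, U.map (F.map P).hom ≤ U) : F.generatedSubrep U X = U := by
  refine le_antisymm (iSup_le hU) (le_iSup_of_le (𝟙 X) ?_)
  rw [F.map_id, ModuleCat.hom_id, Submodule.map_id]

end CategoryTheory.Functor

/-- **Lemma 5.5 / Section 4 lemma.** Let `F` be a functor from a category `C` to complex
vector spaces (a representation of `C`). If `F` is irreducible — i.e. every family of
subspaces `A X ≤ F X` stable under all the operators `F P` is either everywhere zero or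
everywhere full — then for every object `X`, every subspace of `F X` invariant under
`F P` for all endomorphisms `P : X ⟶ X` equals `0` or all of `F X`: all the
subordinated representations of the endomorphism monoids are irreducible. -/
theorem subordinate_irreducible {C : Type*} [Category C] (F : C ⥤ ModuleCat ℂ)
    (hirr : ∀ A : (X : C) → Submodule ℂ (F.obj X),
      (∀ (X Y : C) (P : X ⟶ Y), (A X).map (F.map P).hom ≤ A Y) →
      (∀ X, A X = ⊥) ∨ (∀ X, A X = ⊤))
    (X : C) (U : Submodule ℂ (F.obj X))
    (hU : ∀ P : X ⟶ X, U.map (F.map P).hom ≤ U) :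
    U = ⊥ ∨ U = ⊤ := by
  rw [← Functor.generatedSubrep_self hU]
  exact (hirr _ fun _ _ => Functor.map_generatedSubrep_le U).imp (· X) (· X)
end

section
/- Let M be a ℂ-module, k a natural number, and v₁, …, v_k ∈ M; write νᵢ = ι(vᵢ) for the corresponding degree-one elements of the exterior algebra Λ(M). Then the ordered product (1+ν₁)(1+ν₂)⋯(1+ν_k) equals exp(Σ_{1≤i<j≤k} νᵢνⱼ) · exp(Σ_{i=1}^k νᵢ), where both exponents are nilpotent elements of Λ(M) (in particular (Σᵢνᵢ)² = 0, so exp(Σᵢνᵢ) = 1 + Σᵢνᵢ). (Equation (5.4).) -/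
/-!
Write `νᵢ = ι vᵢ`, `S = Σᵢ νᵢ` and `Q = Σ_{i<j} νᵢνⱼ`. Since `S = ι (Σᵢ vᵢ)`, `S² = 0`, so
`exp S = 1 + S`. The products `νᵢνⱼ` are even, hence commute with every `ν`, so `Q` is a sum of
commuting square-zero elements and is nilpotent. For the product formula peel off the first factor:
with `S'`, `Q'` the sums over the remaining indices, `Q = Q' + ν₁S'`, where the summands commute
and `(ν₁S')² = 0`, so `exp Q = exp Q' · (1 + ν₁S')`; and `(1 + ν₁)(1 + S') = (1 + ν₁S')(1 + S)`.
-/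

open ExteriorAlgebra

/-- The exponential `exp x = Σ_{j} x^j / j!` of a nilpotent element: the sum is finite,
running up to the nilpotency class of `x`. -/
noncomputable def nilExp {A : Type*} [Ring A] [Algebra ℂ A] (x : A) : A :=
  ∑ j ∈ Finset.range (nilpotencyClass x), (j.factorial : ℂ)⁻¹ • x ^ j

open Finset

section NilExp

variable {A : Type*} [Ring A] [Algebra ℂ A]

theorem nilExp_eq_exp [Module ℚ A] (x : A) : nilExp x = IsNilpotent.exp x := by
  refine sum_congr rfl fun j _ => ?_
  rw [show ((j.factorial : ℂ))⁻¹ = (((j.factorial : ℚ)⁻¹ : ℚ) : ℂ) by push_cast; rfl,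
    ratCast_smul_eq ℂ ℚ, Rat.cast_id]

theorem nilExp_add_of_commute {x y : A} (h : Commute x y) (hx : IsNilpotent x)
    (hy : IsNilpotent y) : nilExp (x + y) = nilExp x * nilExp y := by
  let : Module ℚ A := Module.compHom A (algebraMap ℚ ℂ)
  simp only [nilExp_eq_exp]
  exact IsNilpotent.exp_add_of_commute h hx hy

theorem nilExp_eq_one_add_of_sq_eq_zero {x : A} (hx : x ^ 2 = 0) : nilExp x = 1 + x := by
  let : Module ℚ A := Module.compHom A (algebraMap ℚ ℂ)
  rw [nilExp_eq_exp, IsNilpotent.exp_eq_sum hx]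
  simp [sum_range_succ]

theorem Commute.nilExp_right {a x : A} (h : Commute a x) : Commute a (nilExp x) :=
  Commute.sum_right _ _ _ fun j _ => (h.pow_right j).smul_right _

end NilExp

namespace ExteriorAlgebra

section

variable (R : Type*) {M : Type*} [CommRing R] [AddCommGroup M] [Module R M]

def pairSum {k : ℕ} (v : Fin k → M) : ExteriorAlgebra R M :=
  ∑ i, ∑ j ∈ Ioi i, ι R (v i) * ι R (v j)

variable {R}

theorem ι_mul_ι_comm (x y : M) : ι R x * ι R y = -(ι R y * ι R x) :=
  eq_neg_of_add_eq_zero_left (ι_add_mul_swap x y)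

theorem commute_ι_mul_ι_ι (x y z : M) : Commute (ι R x * ι R y) (ι R z) := by
  calc ι R x * ι R y * ι R z = -(ι R x * ι R z * ι R y) := by
        rw [mul_assoc, ι_mul_ι_comm y, mul_neg, mul_assoc]
    _ = ι R z * (ι R x * ι R y) := by
        rw [ι_mul_ι_comm x, neg_mul, neg_neg, mul_assoc]

theorem ι_mul_ι_sq (x y : M) : (ι R x * ι R y) ^ 2 = 0 := by
  rw [sq, ← mul_assoc, (commute_ι_mul_ι_ι x y x).eq, ← mul_assoc (ι R x), ι_sq_zero,
    zero_mul, zero_mul]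

theorem one_add_ι_mul_one_add_ι (x y : M) :
    (1 + ι R x) * (1 + ι R y) = (1 + ι R x * ι R y) * (1 + ι R (x + y)) := by
  have hxyx : ι R x * ι R y * ι R x = 0 := by
    rw [(commute_ι_mul_ι_ι x y x).eq, ← mul_assoc, ι_sq_zero, zero_mul]
  have hxyy : ι R x * ι R y * ι R y = 0 := by rw [mul_assoc, ι_sq_zero, mul_zero]
  simp only [map_add, add_mul, mul_add, one_mul, mul_one, hxyx, hxyy]
  abel

theorem pairSum_succ {k : ℕ} (v : Fin (k + 1) → M) :
    pairSum R v = pairSum R (fun i => v i.succ) + ι R (v 0) * ι R (∑ i : Fin k, v i.succ) := by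
  simp only [pairSum, Fin.sum_univ_succ (f := fun i => ∑ j ∈ Ioi i, _), Fin.sum_Ioi_zero,
    Fin.sum_Ioi_succ, map_sum, mul_sum]
  abel

theorem commute_pairSum_ι {k : ℕ} (v : Fin k → M) (z : M) : Commute (pairSum R v) (ι R z) :=
  Commute.sum_left _ _ _ fun _ _ => Commute.sum_left _ _ _ fun _ _ => commute_ι_mul_ι_ι _ _ _

theorem isNilpotent_pairSum {k : ℕ} (v : Fin k → M) : IsNilpotent (pairSum R v) := by
  induction k with
  | zero => simp [pairSum]
  | succ k ih =>
    rw [pairSum_succ]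
    refine Commute.isNilpotent_add ?_ (ih _) ⟨2, ι_mul_ι_sq _ _⟩
    exact (commute_pairSum_ι _ _).mul_right (commute_pairSum_ι _ _)

end

theorem prod_ofFn_one_add_ι {M : Type*} [AddCommGroup M] [Module ℂ M] {k : ℕ} (v : Fin k → M) :
    (List.ofFn fun i => 1 + ι ℂ (v i)).prod = nilExp (pairSum ℂ v) * (1 + ι ℂ (∑ i, v i)) := by
  induction k with
  | zero => simp [pairSum, nilExp_eq_one_add_of_sq_eq_zero]
  | succ k ih =>
    have hQ' := commute_pairSum_ι (R := ℂ) (fun i => v i.succ)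
    have hexp : nilExp (pairSum ℂ v) = nilExp (pairSum ℂ (fun i => v i.succ)) *
        (1 + ι ℂ (v 0) * ι ℂ (∑ i : Fin k, v i.succ)) := by
      rw [pairSum_succ, nilExp_add_of_commute ((hQ' _).mul_right (hQ' _)) (isNilpotent_pairSum _)
        ⟨2, ι_mul_ι_sq _ _⟩, nilExp_eq_one_add_of_sq_eq_zero (ι_mul_ι_sq _ _)]
    have hcomm : Commute (1 + ι ℂ (v 0)) (nilExp (pairSum ℂ (fun i => v i.succ))) :=
      ((Commute.one_left _).add_left (hQ' _).symm).nilExp_right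
    rw [List.ofFn_succ, List.prod_cons, ih (fun i => v i.succ), ← mul_assoc, hcomm.eq, mul_assoc,
      one_add_ι_mul_one_add_ι, ← mul_assoc, hexp, Fin.sum_univ_succ]

end ExteriorAlgebra

/-- **Equation (5.4).** For degree-one elements `νᵢ = ι vᵢ` of the exterior algebra
`Λ(M)` of a `ℂ`-module `M`, the ordered product `(1+ν₁)(1+ν₂)⋯(1+ν_k)` equals
`exp(Σ_{i<j} νᵢνⱼ) · exp(Σᵢ νᵢ)`; both exponents are nilpotent, and in particular
`(Σᵢνᵢ)² = 0`, so `exp(Σᵢνᵢ) = 1 + Σᵢνᵢ`. -/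
theorem prod_one_add_eq_exp_mul_exp
    {M : Type*} [AddCommGroup M] [Module ℂ M] (k : ℕ) (v : Fin k → M) :
    IsNilpotent (∑ i : Fin k, ∑ j ∈ Finset.Ioi i,
        ExteriorAlgebra.ι ℂ (v i) * ExteriorAlgebra.ι ℂ (v j)) ∧
    ((∑ i : Fin k, ExteriorAlgebra.ι ℂ (v i)) ^ 2 = 0 ∧
      nilExp (∑ i : Fin k, ExteriorAlgebra.ι ℂ (v i))
        = 1 + ∑ i : Fin k, ExteriorAlgebra.ι ℂ (v i)) ∧
    (List.ofFn fun i : Fin k => (1 : ExteriorAlgebra ℂ M) + ExteriorAlgebra.ι ℂ (v i)).prod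
      = nilExp (∑ i : Fin k, ∑ j ∈ Finset.Ioi i,
          ExteriorAlgebra.ι ℂ (v i) * ExteriorAlgebra.ι ℂ (v j))
        * nilExp (∑ i : Fin k, ExteriorAlgebra.ι ℂ (v i)) := by
  have hS : (∑ i, ι ℂ (v i)) ^ 2 = 0 := by rw [← map_sum, sq, ι_sq_zero]
  refine ⟨isNilpotent_pairSum v, ⟨hS, nilExp_eq_one_add_of_sq_eq_zero hS⟩, ?_⟩
  rw [nilExp_eq_one_add_of_sq_eq_zero hS, ← map_sum]
  exact prod_ofFn_one_add_ι v
end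

section
/- Let F be a representation of a purely ordered category whose index set Σ is directed and all of whose objects are of the form V σ. Then the following are equivalent: (a) F is irreducible, i.e. every subrepresentation A of F satisfies either A(σ) = 0 for all σ or A(σ) = F(V σ) for all σ; (b) for every σ ∈ Σ, every subspace of F(V σ) that is invariant under F(P) for all P ∈ End(V σ) equals 0 or F(V σ). (Lemma 5.6.) -/
/-!
For (a) ⇒ (b), an `End(V σ)`-invariant subspace `U ⊆ F(V σ)` generates the subrepresentation
`τ ↦ ∑_{P : V σ ⟶ V τ} F(P) U`, whose value at `σ` is `U` itself. For (b) ⇒ (a), given a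
subrepresentation with `A σ ≠ 0` and any `τ`, pick a common upper bound `κ`: since `μ ∘ λ = 1`,
`F(λ_{σκ})` is injective, so `A κ ≠ 0` and hence `A κ = F(V κ)` by (b); and `F(μ_{κτ})` is
surjective, so `A τ = F(V τ)`.
-/

open CategoryTheory

section

variable {R : Type*} [Ring R] {C : Type*} [Category C] (F : C ⥤ ModuleCat R)

theorem leftInverse_map_hom_of_comp_eq_id {X Y : C} {i : X ⟶ Y} {r : Y ⟶ X}
    (h : i ≫ r = 𝟙 X) : Function.LeftInverse (F.map r).hom (F.map i).hom := fun x => by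
  rw [← LinearMap.comp_apply, ← ModuleCat.hom_comp, ← F.map_comp, h, F.map_id]
  rfl

theorem eq_bot_of_map_le_of_comp_eq_id {X Y : C} {i : X ⟶ Y} {r : Y ⟶ X} (h : i ≫ r = 𝟙 X)
    {S : Submodule R (F.obj X)} {T : Submodule R (F.obj Y)} (hST : S.map (F.map i).hom ≤ T)
    (hT : T = ⊥) : S = ⊥ := by
  apply Submodule.map_injective_of_injective (leftInverse_map_hom_of_comp_eq_id F h).injective
  rw [Submodule.map_bot, ← le_bot_iff, ← hT]
  exact hST

theorem eq_top_of_map_le_of_comp_eq_id {X Y : C} {i : X ⟶ Y} {r : Y ⟶ X} (h : i ≫ r = 𝟙 X)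
    {S : Submodule R (F.obj X)} {T : Submodule R (F.obj Y)} (hTS : T.map (F.map r).hom ≤ S)
    (hT : T = ⊤) : S = ⊤ := by
  rw [eq_top_iff, ← LinearMap.range_eq_top_of_surjective _
    (leftInverse_map_hom_of_comp_eq_id F h).surjective, ← Submodule.map_top, ← hT]
  exact hTS

variable {Idx : Type*} (V : Idx → C) {X : C}

def generatedSubrepresentation (U : Submodule R (F.obj X)) (τ : Idx) : Submodule R (F.obj (V τ)) :=
  ⨆ P : X ⟶ V τ, U.map (F.map P).hom

theorem map_generatedSubrepresentation_le (U : Submodule R (F.obj X)) (τ τ' : Idx) (Q : V τ ⟶ V τ') :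
    (generatedSubrepresentation F V U τ).map (F.map Q).hom ≤ generatedSubrepresentation F V U τ' := by
  rw [generatedSubrepresentation, Submodule.map_iSup]
  refine iSup_le fun P => le_of_eq_of_le ?_ (le_iSup _ (P ≫ Q))
  rw [F.map_comp, ModuleCat.hom_comp, Submodule.map_comp]

theorem generatedSubrepresentation_self {σ : Idx} {U : Submodule R (F.obj (V σ))}
    (hU : ∀ P : V σ ⟶ V σ, U.map (F.map P).hom ≤ U) : generatedSubrepresentation F V U σ = U := by
  refine le_antisymm (iSup_le hU) (le_of_eq_of_le ?_ (le_iSup _ (𝟙 (V σ))))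
  rw [F.map_id, ModuleCat.hom_id, Submodule.map_id]

end

theorem irreducible_iff_endomorphism_irreducible_general
    {Idx : Type*} [Preorder Idx] {C : Type*} [Category C]
    (V : Idx → C)
    (lam : ∀ {σ τ : Idx}, σ ≤ τ → (V σ ⟶ V τ))
    (mu : ∀ {σ τ : Idx}, σ ≤ τ → (V τ ⟶ V σ))
    (h56 : ∀ {σ τ : Idx} (h : σ ≤ τ), lam h ≫ mu h = 𝟙 (V σ))
    (hdir : ∀ σ τ : Idx, ∃ κ : Idx, σ ≤ κ ∧ τ ≤ κ)
    (F : C ⥤ ModuleCat ℂ) :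
    ((∀ A : (σ : Idx) → Submodule ℂ (F.obj (V σ)),
        (∀ (σ τ : Idx) (P : V σ ⟶ V τ), (A σ).map (F.map P).hom ≤ A τ) →
        (∀ σ, A σ = ⊥) ∨ (∀ σ, A σ = ⊤)) ↔
      (∀ (σ : Idx) (U : Submodule ℂ (F.obj (V σ))),
        (∀ P : V σ ⟶ V σ, U.map (F.map P).hom ≤ U) → U = ⊥ ∨ U = ⊤)) := by
  constructor
  · intro ha σ U hU
    rw [← generatedSubrepresentation_self F V hU]
    exact (ha _ (map_generatedSubrepresentation_le F V U)).imp (· σ) (· σ)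
  · intro hb A hA
    refine or_iff_not_imp_left.2 fun hA_ne_bot τ => ?_
    obtain ⟨σ, hσ⟩ := not_forall.1 hA_ne_bot
    obtain ⟨κ, hσκ, hτκ⟩ := hdir σ τ
    have hκ : A κ = ⊤ := (hb κ (A κ) (hA κ κ)).resolve_left
      fun hbot => hσ (eq_bot_of_map_le_of_comp_eq_id F (h56 hσκ) (hA σ κ _) hbot)
    exact eq_top_of_map_le_of_comp_eq_id F (h56 hτκ) (hA κ τ _) hκ

/-- **Lemma 5.6.** Let `F` be a representation of a purely ordered category whose directed
index set numbers all the objects. Then `F` is irreducible (every subrepresentation is the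
zero family or the full family) if and only if for every `σ` every subspace of `F (V σ)`
invariant under all the operators `F P`, `P ∈ End(V σ)`, equals `0` or `F (V σ)`. -/
theorem irreducible_iff_endomorphism_irreducible
    {Idx : Type*} [Preorder Idx] {C : Type*} [Category C]
    (V : Idx → C)
    (lam : ∀ {σ τ : Idx}, σ ≤ τ → (V σ ⟶ V τ))
    (mu : ∀ {σ τ : Idx}, σ ≤ τ → (V τ ⟶ V σ))
    (h56 : ∀ {σ τ : Idx} (h : σ ≤ τ), lam h ≫ mu h = 𝟙 (V σ))
    (h57a : ∀ {σ σ' σ'' : Idx} (h : σ ≤ σ') (h' : σ' ≤ σ''),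
      lam h ≫ lam h' = lam (h.trans h'))
    (h57b : ∀ {σ σ' σ'' : Idx} (h : σ ≤ σ') (h' : σ' ≤ σ''),
      mu h' ≫ mu h = mu (h.trans h'))
    (hobj : ∀ X : C, ∃ σ : Idx, V σ = X)
    (hdir : ∀ σ τ : Idx, ∃ κ : Idx, σ ≤ κ ∧ τ ≤ κ)
    (F : C ⥤ ModuleCat ℂ) :
    ((∀ A : (σ : Idx) → Submodule ℂ (F.obj (V σ)),
        (∀ (σ τ : Idx) (P : V σ ⟶ V τ), (A σ).map (F.map P).hom ≤ A τ) →
        (∀ σ, A σ = ⊥) ∨ (∀ σ, A σ = ⊤)) ↔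
      (∀ (σ : Idx) (U : Submodule ℂ (F.obj (V σ))),
        (∀ P : V σ ⟶ V σ, U.map (F.map P).hom ≤ U) → U = ⊥ ∨ U = ⊤)) :=
  irreducible_iff_endomorphism_irreducible_general V lam mu h56 hdir F
end

section
/- Let F be a representation of a purely ordered category whose index set Σ is directed and all of whose objects are of the form V σ, with all spaces F(V σ) finite-dimensional over ℂ. Suppose that for every σ, every subspace of F(V σ) invariant under F(P) for all P ∈ End(V σ) possesses an invariant complement (i.e. the subordinate representations of the monoids End(V σ) are completely reducible). Let S be an irreducible subrepresentation of F, meaning S is not the zero family and every subrepresentation A of F with A(σ) ≤ S(σ) for all σ equals S or is the zero family. Then there exists a subrepresentation T of F complementary to S: S(σ) ∩ T(σ) = 0 and S(σ) + T(σ) = F(V σ) for every σ ∈ Σ. (Theorem 5.4: representations of ordered Cayley–Klein categories with completely reducible fibers are completely reducible.) -/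
open CategoryTheory

/-!
By Zorn's lemma pick a subrepresentation `T` maximal among those meeting `S` trivially. At an
index `κ` with `S κ ≠ 0`, let `U` be an `End(V κ)`-invariant complement of `S κ + T κ` and `D`
the subrepresentation generated by `U`, so `D κ = U`. Then `S ∩ (T + D)` is a subrepresentation
of `S`; it is not `S`, because `S κ ∩ (T κ + U) = 0` by the modular law, so it is zero. By
maximality `D ≤ T`, whence `U = 0` and `S κ + T κ = F (V κ)`. Every `σ` lies below such a `κ`,
and since `λ ≫ μ = 𝟙` the map `F μ` sends `S κ + T κ` onto `S σ + T σ`.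
-/

section

variable {R : Type*} [Ring R] {ι : Type*} {C : Type*} [Category C]
  (V : ι → C) (F : C ⥤ ModuleCat R)

def IsSubrep (A : (σ : ι) → Submodule R (F.obj (V σ))) : Prop :=
  ∀ (σ τ : ι) (P : V σ ⟶ V τ), (A σ).map (F.map P).hom ≤ A τ

def generatedSubrep (κ : ι) (U : Submodule R (F.obj (V κ))) (σ : ι) :
    Submodule R (F.obj (V σ)) :=
  ⨆ P : V κ ⟶ V σ, U.map (F.map P).hom

variable {V F}

lemma Submodule.map_functor_map_comp {X Y Z : C} (f : X ⟶ Y) (g : Y ⟶ Z)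
    (p : Submodule R (F.obj X)) :
    (p.map (F.map f).hom).map (F.map g).hom = p.map (F.map (f ≫ g)).hom := by
  rw [F.map_comp, ModuleCat.hom_comp, Submodule.map_comp]

lemma isSubrep_top : IsSubrep V F (⊤ : (σ : ι) → Submodule R (F.obj (V σ))) :=
  fun _ _ _ => le_top

lemma IsSubrep.sup {A B : (σ : ι) → Submodule R (F.obj (V σ))}
    (hA : IsSubrep V F A) (hB : IsSubrep V F B) : IsSubrep V F (A ⊔ B) := fun σ τ P => by
  simpa only [Pi.sup_apply, Submodule.map_sup] using sup_le_sup (hA σ τ P) (hB σ τ P)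

lemma IsSubrep.inf {A B : (σ : ι) → Submodule R (F.obj (V σ))}
    (hA : IsSubrep V F A) (hB : IsSubrep V F B) : IsSubrep V F (A ⊓ B) := fun σ τ P =>
  le_inf ((Submodule.map_mono inf_le_left).trans (hA σ τ P))
    ((Submodule.map_mono inf_le_right).trans (hB σ τ P))

lemma isSubrep_sSup {c : Set ((σ : ι) → Submodule R (F.obj (V σ)))}
    (hc : ∀ A ∈ c, IsSubrep V F A) : IsSubrep V F (sSup c) := fun σ τ P => by
  rw [sSup_apply, sSup_apply, Submodule.map_iSup]
  exact iSup_le fun A => (hc A A.2 σ τ P).trans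
    (le_iSup (fun B : c => (B : (σ : ι) → Submodule R (F.obj (V σ))) τ) A)

lemma isSubrep_generatedSubrep (κ : ι) (U : Submodule R (F.obj (V κ))) :
    IsSubrep V F (generatedSubrep V F κ U) := fun σ τ P => by
  rw [generatedSubrep, Submodule.map_iSup]
  exact iSup_le fun Q => (Submodule.map_functor_map_comp Q P U).le.trans
    (le_iSup (fun Q' : V κ ⟶ V τ => U.map (F.map Q').hom) (Q ≫ P))

lemma generatedSubrep_self {κ : ι} {U : Submodule R (F.obj (V κ))}
    (hU : ∀ P : V κ ⟶ V κ, U.map (F.map P).hom ≤ U) : generatedSubrep V F κ U κ = U := by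
  refine le_antisymm (iSup_le hU) ?_
  refine le_trans ?_ (le_iSup (fun P : V κ ⟶ V κ => U.map (F.map P).hom) (𝟙 (V κ)))
  rw [F.map_id, ModuleCat.hom_id, Submodule.map_id]

lemma IsSubrep.map_eq_of_retraction {A : (σ : ι) → Submodule R (F.obj (V σ))}
    (hA : IsSubrep V F A) {σ κ : ι} {lam : V σ ⟶ V κ} {mu : V κ ⟶ V σ} (h : lam ≫ mu = 𝟙 (V σ)) :
    (A κ).map (F.map mu).hom = A σ := by
  refine le_antisymm (hA κ σ mu) ?_
  calc A σ = (A σ).map (F.map (lam ≫ mu)).hom := by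
        rw [h, F.map_id, ModuleCat.hom_id, Submodule.map_id]
    _ = ((A σ).map (F.map lam).hom).map (F.map mu).hom :=
        (Submodule.map_functor_map_comp lam mu _).symm
    _ ≤ (A κ).map (F.map mu).hom := Submodule.map_mono (hA σ κ lam)

lemma exists_maximal_isSubrep_disjoint (S : (σ : ι) → Submodule R (F.obj (V σ))) :
    ∃ T, Maximal (fun T => IsSubrep V F T ∧ ∀ σ, Disjoint (S σ) (T σ)) T := by
  let Ω := {T | IsSubrep V F T ∧ ∀ σ, Disjoint (S σ) (T σ)}
  have hchain : ∀ c ⊆ Ω, IsChain (· ≤ ·) c → ∀ A ∈ c, ∃ ub ∈ Ω, ∀ A ∈ c, A ≤ ub := by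
    refine fun c hcΩ hc _ _ => ⟨sSup c, ⟨isSubrep_sSup fun A hA => (hcΩ hA).1, fun σ => ?_⟩,
      fun _ => le_sSup⟩
    have hdir : Directed (· ≤ ·) fun A : c => (A : (σ : ι) → Submodule R (F.obj (V σ))) σ :=
      (hc.directed (f := id)).mono_comp _ fun _ _ h => h σ
    rw [sSup_apply, hdir.disjoint_iSup_right]
    exact fun A => (hcΩ A.2).2 σ
  obtain ⟨T, -, hT⟩ :=
    zorn_le_nonempty₀ Ω hchain ⊥ ⟨fun _ _ _ => by simp, fun _ => disjoint_bot_right⟩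
  exact ⟨T, hT⟩

lemma sup_eq_top_of_maximal_disjoint {S T : (σ : ι) → Submodule R (F.obj (V σ))}
    (hS : IsSubrep V F S)
    (hSirr : ∀ A, IsSubrep V F A → (∀ σ, A σ ≤ S σ) → (∀ σ, A σ = S σ) ∨ (∀ σ, A σ = ⊥))
    (hT : Maximal (fun T => IsSubrep V F T ∧ ∀ σ, Disjoint (S σ) (T σ)) T)
    {κ : ι} (hSκ : S κ ≠ ⊥) {U : Submodule R (F.obj (V κ))}
    (hU : ∀ P : V κ ⟶ V κ, U.map (F.map P).hom ≤ U) (hWU : IsCompl (S κ ⊔ T κ) U) :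
    S κ ⊔ T κ = ⊤ := by
  set D := generatedSubrep V F κ U
  have hD : IsSubrep V F D := isSubrep_generatedSubrep κ U
  have hDκ : D κ = U := generatedSubrep_self hU
  rcases hSirr (S ⊓ (T ⊔ D)) (hS.inf (hT.prop.1.sup hD)) (fun σ => inf_le_left) with hAS | hA0
  · have hdisj : Disjoint (S κ) (T κ ⊔ U) :=
      (hT.prop.2 κ).disjoint_sup_right_of_disjoint_sup_left hWU.disjoint
    exact absurd (hdisj.eq_bot_of_le (hDκ ▸ inf_eq_left.1 (hAS κ))) hSκ
  · have hTD : T ⊔ D ≤ T :=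
      hT.2 ⟨hT.prop.1.sup hD, fun σ => disjoint_iff.2 (hA0 σ)⟩ le_sup_left
    have hU_bot : U = ⊥ := hWU.disjoint.eq_bot_of_ge
      (hDκ ▸ (le_sup_right.trans (hTD κ)).trans le_sup_right)
    simpa [hU_bot] using hWU.sup_eq_top

end

/-- **Theorem 5.4** (complete reducibility for ordered Cayley–Klein categories).
Let `F` be a representation of a purely ordered category whose directed index set numbers
all the objects, with all spaces `F (V σ)` finite-dimensional over `ℂ`. Assume that every
`End(V σ)`-invariant subspace of `F (V σ)` has an `End(V σ)`-invariant complement.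
Then every irreducible subrepresentation `S` of `F` admits a complementary
subrepresentation `T`: `S σ ∩ T σ = 0` and `S σ + T σ = F (V σ)` for every `σ`. -/
theorem irreducible_subrep_has_complement
    {Idx : Type*} [Preorder Idx] {C : Type*} [Category C]
    (V : Idx → C)
    (lam : ∀ {σ τ : Idx}, σ ≤ τ → (V σ ⟶ V τ))
    (mu : ∀ {σ τ : Idx}, σ ≤ τ → (V τ ⟶ V σ))
    (h56 : ∀ {σ τ : Idx} (h : σ ≤ τ), lam h ≫ mu h = 𝟙 (V σ))
    (h57a : ∀ {σ σ' σ'' : Idx} (h : σ ≤ σ') (h' : σ' ≤ σ''),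
      lam h ≫ lam h' = lam (h.trans h'))
    (h57b : ∀ {σ σ' σ'' : Idx} (h : σ ≤ σ') (h' : σ' ≤ σ''),
      mu h' ≫ mu h = mu (h.trans h'))
    (hobj : ∀ X : C, ∃ σ : Idx, V σ = X)
    (hdir : ∀ σ τ : Idx, ∃ κ : Idx, σ ≤ κ ∧ τ ≤ κ)
    (F : C ⥤ ModuleCat ℂ)
    [∀ σ : Idx, FiniteDimensional ℂ (F.obj (V σ))]
    (hcompl : ∀ (σ : Idx) (U : Submodule ℂ (F.obj (V σ))),
      (∀ P : V σ ⟶ V σ, U.map (F.map P).hom ≤ U) →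
      ∃ U' : Submodule ℂ (F.obj (V σ)),
        (∀ P : V σ ⟶ V σ, U'.map (F.map P).hom ≤ U') ∧ U ⊓ U' = ⊥ ∧ U ⊔ U' = ⊤)
    (S : (σ : Idx) → Submodule ℂ (F.obj (V σ)))
    (hS : ∀ (σ τ : Idx) (P : V σ ⟶ V τ), (S σ).map (F.map P).hom ≤ S τ)
    (hSne : ¬ (∀ σ, S σ = ⊥))
    (hSirr : ∀ A : (σ : Idx) → Submodule ℂ (F.obj (V σ)),
      (∀ (σ τ : Idx) (P : V σ ⟶ V τ), (A σ).map (F.map P).hom ≤ A τ) →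
      (∀ σ, A σ ≤ S σ) →
      (∀ σ, A σ = S σ) ∨ (∀ σ, A σ = ⊥)) :
    ∃ T : (σ : Idx) → Submodule ℂ (F.obj (V σ)),
      (∀ (σ τ : Idx) (P : V σ ⟶ V τ), (T σ).map (F.map P).hom ≤ T τ) ∧
      ∀ σ, S σ ⊓ T σ = ⊥ ∧ S σ ⊔ T σ = ⊤ := by
  obtain ⟨σ₀, hσ₀⟩ : ∃ σ₀, S σ₀ ≠ ⊥ := not_forall.1 hSne
  obtain ⟨T, hT⟩ := exists_maximal_isSubrep_disjoint S
  refine ⟨T, hT.prop.1, fun σ => ⟨disjoint_iff.1 (hT.prop.2 σ), ?_⟩⟩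
  obtain ⟨κ, hσ₀κ, hσκ⟩ := hdir σ₀ σ
  have hSκ : S κ ≠ ⊥ := fun h => hσ₀ <| by
    rw [← IsSubrep.map_eq_of_retraction hS (h56 hσ₀κ), h, Submodule.map_bot]
  have hW : IsSubrep V F (S ⊔ T) := IsSubrep.sup hS hT.prop.1
  obtain ⟨U, hU, hWU, hWU'⟩ := hcompl κ (S κ ⊔ T κ) (hW κ κ)
  have hκ : S κ ⊔ T κ = ⊤ := sup_eq_top_of_maximal_disjoint hS hSirr hT hSκ hU
    ⟨disjoint_iff.2 hWU, codisjoint_iff.2 hWU'⟩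
  calc S σ ⊔ T σ = (S κ ⊔ T κ).map (F.map (mu hσκ)).hom :=
        (hW.map_eq_of_retraction (h56 hσκ)).symm
    _ = ⊤ := by rw [hκ]; exact isSubrep_top.map_eq_of_retraction (h56 hσκ)
end
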